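/- arXiv:0912.0587 — 2 statements merged into one kernel-verified Lean document; each statement's English description precedes it below -/
import Mathlib

section
/- If ρ(θ;t) is a smooth family of density matrices satisfying ∂_θ ρ = (Lρ + ρL)/2 for a Hermitian SLD L(θ;t), and ρ evolves by ∂_t ρ = K(ρ) for a linear superoperator K, then the time derivative of the quantum Fisher information F = Tr(L²ρ) equals Tr( L(2∂_θ − L) K(ρ) ), i.e. dF/dt = 2 Tr(L ∂_θ(Kρ)) − Tr(L² Kρ). -/
open Matrix ComplexOrder

/-!
Differentiate `F = Tr(L L ρ)` in `t` by the product rule, and differentiate the SLD equation in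
`t` to express `∂_t ∂_θ ρ` through `∂_t L` and `∂_t ρ = K ρ`. Cyclicity of the trace then turns
`2 Tr(L ∂_t ∂_θ ρ) − Tr(L² K ρ)` into `Tr((∂_t L · L + L · ∂_t L) ρ + L² K ρ)`, which is `dF/dt`.
-/

section EntrywiseDeriv

variable {𝕜 𝔸 : Type*} [NontriviallyNormedField 𝕜] [NormedRing 𝔸] [NormedAlgebra 𝕜 𝔸]
  {l m p : Type*}

/-- Matrices carry no canonical norm, so derivatives of matrix-valued maps are taken entrywise. -/
def HasEntrywiseDerivAt (A : 𝕜 → Matrix m p 𝔸) (A' : Matrix m p 𝔸) (t : 𝕜) : Prop :=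
  ∀ i j, HasDerivAt (fun s => A s i j) (A' i j) t

namespace HasEntrywiseDerivAt

variable {A B : 𝕜 → Matrix m p 𝔸} {A' B' : Matrix m p 𝔸} {t : 𝕜}

theorem unique (hA : HasEntrywiseDerivAt A A' t) (hA₁ : HasEntrywiseDerivAt A B' t) :
    A' = B' :=
  Matrix.ext fun i j => (hA i j).unique (hA₁ i j)

theorem add (hA : HasEntrywiseDerivAt A A' t) (hB : HasEntrywiseDerivAt B B' t) :
    HasEntrywiseDerivAt (fun s => A s + B s) (A' + B') t :=
  fun i j => (hA i j).add (hB i j)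

theorem const_smul {R : Type*} [Monoid R] [DistribMulAction R 𝔸] [SMulCommClass 𝕜 R 𝔸]
    [ContinuousConstSMul R 𝔸] (c : R) (hA : HasEntrywiseDerivAt A A' t) :
    HasEntrywiseDerivAt (fun s => c • A s) (c • A') t :=
  fun i j => (hA i j).fun_const_smul c

theorem mul [Fintype p] {C : 𝕜 → Matrix p l 𝔸} {C' : Matrix p l 𝔸}
    (hA : HasEntrywiseDerivAt A A' t) (hC : HasEntrywiseDerivAt C C' t) :
    HasEntrywiseDerivAt (fun s => A s * C s) (A' * C t + A t * C') t := by
  intro i j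
  simpa only [mul_apply, Matrix.add_apply, Finset.sum_add_distrib] using
    HasDerivAt.fun_sum fun k _ => (hA i k).fun_mul (hC k j)

theorem trace [Fintype m] {A : 𝕜 → Matrix m m 𝔸} {A' : Matrix m m 𝔸}
    (hA : HasEntrywiseDerivAt A A' t) :
    HasDerivAt (fun s => (A s).trace) A'.trace t :=
  HasDerivAt.fun_sum fun i _ => hA i i

end HasEntrywiseDerivAt

end EntrywiseDeriv

theorem trace_mul_sld_deriv_sub {n R : Type*} [Fintype n] [DecidableEq n] [CommRing R]
    (L L' ρ ρ' : Matrix n n R) :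
    (L * (L' * ρ + L * ρ' + (ρ' * L + ρ * L'))).trace - (L ^ 2 * ρ').trace =
      ((L' * L + L * L') * ρ + L * L * ρ').trace := by
  have hcycle₁ : (L * (ρ' * L)).trace = (L * L * ρ').trace := by
    rw [← Matrix.mul_assoc, trace_mul_cycle]
  have hcycle₂ : (L * (ρ * L')).trace = (L' * L * ρ).trace := by
    rw [← Matrix.mul_assoc, trace_mul_cycle]
  rw [sq]
  simp only [Matrix.mul_add, Matrix.add_mul, trace_add, hcycle₁, hcycle₂, Matrix.mul_assoc]
  ring

theorem qfi_flow_formula_general {n : ℕ}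
    (ρ L ρθ : ℝ → ℝ → Matrix (Fin n) (Fin n) ℂ)
    (K : Matrix (Fin n) (Fin n) ℂ →ₗ[ℂ] Matrix (Fin n) (Fin n) ℂ)
    (θ t : ℝ) (Lt ρθt : Matrix (Fin n) (Fin n) ℂ)
    (hSLD : ∀ x s, ρθ x s = (1 / 2 : ℂ) • (L x s * ρ x s + ρ x s * L x s))
    (hK : ∀ x s i j, HasDerivAt (fun u => ρ x u i j) (K (ρ x s) i j) s)
    (hLt : ∀ i j, HasDerivAt (fun s => L θ s i j) (Lt i j) t)
    (hρθt : ∀ i j, HasDerivAt (fun s => ρθ θ s i j) (ρθt i j) t) :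
    HasDerivAt (fun s => ((L θ s) ^ 2 * ρ θ s).trace)
      (2 * (L θ t * ρθt).trace - ((L θ t) ^ 2 * K (ρ θ t)).trace) t := by
  have hL : HasEntrywiseDerivAt (L θ) Lt t := hLt
  have hρ : HasEntrywiseDerivAt (ρ θ) (K (ρ θ t)) t := hK θ t
  have hρθ : HasEntrywiseDerivAt (ρθ θ) ((1 / 2 : ℂ) • (Lt * ρ θ t + L θ t * K (ρ θ t) +
      (K (ρ θ t) * L θ t + ρ θ t * Lt))) t := by
    rw [show ρθ θ = _ from funext (hSLD θ)]
    exact ((hL.mul hρ).add (hρ.mul hL)).const_smul _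
  rw [HasEntrywiseDerivAt.unique hρθt hρθ, Matrix.mul_smul, trace_smul, smul_eq_mul,
    ← mul_assoc, show (2 : ℂ) * (1 / 2) = 1 by norm_num, one_mul, trace_mul_sld_deriv_sub]
  simpa only [sq] using ((hL.mul hL).mul hρ).trace

/-- If `∂_θ ρ = (Lρ + ρL)/2` (SLD equation) and `∂_t ρ = K(ρ)` for a linear
superoperator `K`, then the quantum Fisher information `F = Tr(L²ρ)` satisfies
`dF/dt = 2 Tr(L ∂_θ(Kρ)) − Tr(L² Kρ)`. -/
theorem qfi_flow_formula {n : ℕ}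
    (ρ L ρθ : ℝ → ℝ → Matrix (Fin n) (Fin n) ℂ)
    (K : Matrix (Fin n) (Fin n) ℂ →ₗ[ℂ] Matrix (Fin n) (Fin n) ℂ)
    (θ t : ℝ) (Lt ρθt : Matrix (Fin n) (Fin n) ℂ)
    (hHerm : ∀ x s, (L x s).IsHermitian)
    (hρ : ∀ x s, (ρ x s).PosSemidef ∧ (ρ x s).trace = 1)
    (hSLD : ∀ x s, ρθ x s = (1 / 2 : ℂ) • (L x s * ρ x s + ρ x s * L x s))
    (hρθ : ∀ x s i j, HasDerivAt (fun y => ρ y s i j) (ρθ x s i j) x)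
    (hK : ∀ x s i j, HasDerivAt (fun u => ρ x u i j) (K (ρ x s) i j) s)
    (hLt : ∀ i j, HasDerivAt (fun s => L θ s i j) (Lt i j) t)
    (hρθt : ∀ i j, HasDerivAt (fun s => ρθ θ s i j) (ρθt i j) t)
    (hmix : ∀ i j, HasDerivAt (fun x => K (ρ x t) i j) (ρθt i j) θ) :
    HasDerivAt (fun s => ((L θ s) ^ 2 * ρ θ s).trace)
      (2 * (L θ t * ρθt).trace - ((L θ t) ^ 2 * K (ρ θ t)).trace) t :=
  qfi_flow_formula_general ρ L ρθ K θ t Lt ρθt hSLD hK hLt hρθt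
end

section
/- For the qubit family ρ_S(θ,t) = (I + B·σ)/2 with Bloch vector B = (h cos θ, −h sin θ, h² − 1) where 0 < h ≤ 1, the matrix L = i h (|ψ₁⟩⟨ψ₂| − |ψ₂⟩⟨ψ₁|) constructed from the eigenvectors of ρ_S via L_{ij} = 2⟨ψ_i|∂_θ ρ_S|ψ_j⟩/(p_i + p_j) satisfies the SLD equation ∂_θ ρ_S = (Lρ_S + ρ_S L)/2, and the quantum Fisher information equals F_θ = Tr(L²ρ_S) = h². -/
open Matrix ComplexOrder

noncomputable section

def σx : Matrix (Fin 2) (Fin 2) ℂ := !![0, 1; 1, 0]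
def σy : Matrix (Fin 2) (Fin 2) ℂ := !![0, -Complex.I; Complex.I, 0]
def σz : Matrix (Fin 2) (Fin 2) ℂ := !![1, 0; 0, -1]

/-- Bloch-vector state `ρ_S = ½(I + h cosθ σ_x − h sinθ σ_y + (h²−1) σ_z)`. -/
def ρS (h θ : ℝ) : Matrix (Fin 2) (Fin 2) ℂ :=
  (1 / 2 : ℂ) • ((1 : Matrix (Fin 2) (Fin 2) ℂ)
    + ((h * Real.cos θ : ℝ) : ℂ) • σx
    + ((-(h * Real.sin θ) : ℝ) : ℂ) • σy
    + ((h ^ 2 - 1 : ℝ) : ℂ) • σz)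

/-- The θ-derivative of `ρS`. -/
def ρSθ (h θ : ℝ) : Matrix (Fin 2) (Fin 2) ℂ :=
  (1 / 2 : ℂ) • (((-(h * Real.sin θ) : ℝ) : ℂ) • σx
    + ((-(h * Real.cos θ) : ℝ) : ℂ) • σy)

/-! Write `ρ_S = ½(I + r·σ)` and `∂_θ ρ_S = ½ ṙ·σ`. The Pauli matrices anticommute pairwise and
square to `I`, so `{u·σ, v·σ} = 2 (u ⬝ v) I`. Since `r ⬝ ṙ = 0`, this makes `L = ṙ·σ` a solution of
the SLD equation, and `L² = |ṙ|² I` gives `Tr(L² ρ_S) = |ṙ|² Tr ρ_S = h²`. -/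

def pauliVec (v : Fin 3 → ℝ) : Matrix (Fin 2) (Fin 2) ℂ :=
  (v 0 : ℂ) • σx + (v 1 : ℂ) • σy + (v 2 : ℂ) • σz

def blochState (r : Fin 3 → ℝ) : Matrix (Fin 2) (Fin 2) ℂ :=
  (1 / 2 : ℂ) • (1 + pauliVec r)

lemma isHermitian_pauliVec (v : Fin 3 → ℝ) : (pauliVec v).IsHermitian := by
  ext i j
  fin_cases i <;> fin_cases j <;> simp [pauliVec, σx, σy, σz, Complex.conj_ofReal]

lemma trace_pauliVec (v : Fin 3 → ℝ) : (pauliVec v).trace = 0 := by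
  simp [pauliVec, σx, σy, σz, Matrix.trace, Fin.sum_univ_two]

lemma trace_blochState (r : Fin 3 → ℝ) : (blochState r).trace = 1 := by
  simp [blochState, trace_pauliVec]

lemma pauliVec_mul_add_mul_swap (u v : Fin 3 → ℝ) :
    pauliVec u * pauliVec v + pauliVec v * pauliVec u = ((2 * (u ⬝ᵥ v) : ℝ) : ℂ) • 1 := by
  ext i j
  fin_cases i <;> fin_cases j <;>
    simp [pauliVec, σx, σy, σz, dotProduct, Fin.sum_univ_three] <;>
    ring_nf <;> simp [Complex.I_sq]

lemma pauliVec_sq (v : Fin 3 → ℝ) : pauliVec v ^ 2 = ((v ⬝ᵥ v : ℝ) : ℂ) • 1 := by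
  rw [sq]
  apply smul_right_injective _ (two_ne_zero : (2 : ℂ) ≠ 0)
  simp only [two_smul, pauliVec_mul_add_mul_swap, smul_smul, Complex.ofReal_mul,
    Complex.ofReal_ofNat]

lemma pauliVec_mul_blochState_add_blochState_mul (r v : Fin 3 → ℝ) (hrv : r ⬝ᵥ v = 0) :
    pauliVec v * blochState r + blochState r * pauliVec v = pauliVec v := by
  calc pauliVec v * blochState r + blochState r * pauliVec v
      = pauliVec v + (1 / 2 : ℂ) • (pauliVec r * pauliVec v + pauliVec v * pauliVec r) := by
        simp only [blochState, mul_add, add_mul, mul_smul_comm, smul_mul_assoc, mul_one, one_mul,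
          smul_add]
        module
    _ = pauliVec v := by simp [pauliVec_mul_add_mul_swap, hrv]

lemma trace_pauliVec_sq_mul_blochState (r v : Fin 3 → ℝ) :
    (pauliVec v ^ 2 * blochState r).trace = ((v ⬝ᵥ v : ℝ) : ℂ) := by
  rw [pauliVec_sq, smul_mul_assoc, one_mul, trace_smul, trace_blochState, smul_eq_mul, mul_one]

lemma hasDerivAt_pauliVec_apply {r : ℝ → Fin 3 → ℝ} {r' : Fin 3 → ℝ} {θ : ℝ}
    (hr : ∀ k, HasDerivAt (fun x => r x k) (r' k) θ) (i j : Fin 2) :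
    HasDerivAt (fun x => pauliVec (r x) i j) (pauliVec r' i j) θ := by
  simp only [pauliVec, Matrix.add_apply, Matrix.smul_apply, smul_eq_mul]
  exact (((hr 0).ofReal_comp.mul_const _).add ((hr 1).ofReal_comp.mul_const _)).add
    ((hr 2).ofReal_comp.mul_const _)

lemma hasDerivAt_blochState_apply {r : ℝ → Fin 3 → ℝ} {r' : Fin 3 → ℝ} {θ : ℝ}
    (hr : ∀ k, HasDerivAt (fun x => r x k) (r' k) θ) (i j : Fin 2) :
    HasDerivAt (fun x => blochState (r x) i j) (((1 / 2 : ℂ) • pauliVec r') i j) θ := by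
  simp only [blochState, Matrix.smul_apply, Matrix.add_apply, smul_eq_mul]
  simpa using ((hasDerivAt_pauliVec_apply hr i j).const_add _).const_mul (1 / 2 : ℂ)

lemma ρS_eq_blochState (h θ : ℝ) :
    ρS h θ = blochState ![h * Real.cos θ, -(h * Real.sin θ), h ^ 2 - 1] := by
  simp [ρS, blochState, pauliVec, add_assoc]

lemma ρSθ_eq_smul_pauliVec (h θ : ℝ) :
    ρSθ h θ = (1 / 2 : ℂ) • pauliVec ![-(h * Real.sin θ), -(h * Real.cos θ), 0] := by
  simp [ρSθ, pauliVec]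

theorem qubit_qfi_eq_h_sq_general (h θ : ℝ) :
    (∀ i j, HasDerivAt (fun x => ρS h x i j) (ρSθ h θ i j) θ) ∧
    ∃ L : Matrix (Fin 2) (Fin 2) ℂ, L.IsHermitian ∧
      ρSθ h θ = (1 / 2 : ℂ) • (L * ρS h θ + ρS h θ * L) ∧
      (L ^ 2 * ρS h θ).trace = ((h ^ 2 : ℝ) : ℂ) := by
  set r : ℝ → Fin 3 → ℝ := fun x => ![h * Real.cos x, -(h * Real.sin x), h ^ 2 - 1]
  set v : Fin 3 → ℝ := ![-(h * Real.sin θ), -(h * Real.cos θ), 0]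
  have hr : ∀ k, HasDerivAt (fun x => r x k) (v k) θ := by
    intro k
    fin_cases k
    · simpa [r, v, mul_comm] using (Real.hasDerivAt_cos θ).const_mul h
    · simpa [r, v, mul_comm] using ((Real.hasDerivAt_sin θ).const_mul h).fun_neg
    · exact hasDerivAt_const θ _
  have hrv : r θ ⬝ᵥ v = 0 := by
    simp only [r, v, dotProduct, Fin.sum_univ_three, cons_val_zero, cons_val_one, cons_val]
    ring
  have hvv : v ⬝ᵥ v = h ^ 2 := by
    simp only [v, dotProduct, Fin.sum_univ_three, cons_val_zero, cons_val_one, cons_val]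
    linear_combination h ^ 2 * Real.sin_sq_add_cos_sq θ
  rw [ρSθ_eq_smul_pauliVec, ρS_eq_blochState]
  refine ⟨fun i j => ?_, pauliVec v, isHermitian_pauliVec v, ?_, ?_⟩
  · simpa only [ρS_eq_blochState] using hasDerivAt_blochState_apply hr i j
  · rw [pauliVec_mul_blochState_add_blochState_mul _ _ hrv]
  · rw [trace_pauliVec_sq_mul_blochState, hvv]

/-- For the qubit family `ρ_S` there is a Hermitian SLD `L` solving
`∂_θ ρ_S = (Lρ_S + ρ_S L)/2`, and the quantum Fisher information is
`F_θ = Tr(L² ρ_S) = h²`. -/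
theorem qubit_qfi_eq_h_sq (h θ : ℝ) (hpos : 0 < h) (hle : h ≤ 1) :
    (∀ i j, HasDerivAt (fun x => ρS h x i j) (ρSθ h θ i j) θ) ∧
    ∃ L : Matrix (Fin 2) (Fin 2) ℂ, L.IsHermitian ∧
      ρSθ h θ = (1 / 2 : ℂ) • (L * ρS h θ + ρS h θ * L) ∧
      (L ^ 2 * ρS h θ).trace = ((h ^ 2 : ℝ) : ℂ) :=
  qubit_qfi_eq_h_sq_general h θ

end
end
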